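/- Let X be a connected quandle. Then the universal covering quandle X̂ = Ker(ε) with operation g◁h := e_a⁻¹ g h⁻¹ e_a h is also connected. -/

import Mathlib

/-- A quandle in the convention of the paper. -/
class PQuandle (X : Type*) where
  op : X → X → X
  op_self : ∀ a : X, op a a = a
  op_bij : ∀ a : X, Function.Bijective (fun x => op x a)
  op_distrib : ∀ a b c : X, op (op a b) c = op (op a c) (op b c)

infixl:65 " ◁ " => PQuandle.op

namespace PQuandle

variable {X : Type*} [PQuandle X]

/-- The `n`-fold right operation `x ◁ⁿ y`. -/
def opn (x : X) (n : ℕ) (y : X) : X := (fun z => z ◁ y)^[n] x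

/-- The right translation `(· ◁ y)` as a permutation of `X`. -/
noncomputable def act (y : X) : Equiv.Perm X := Equiv.ofBijective _ (op_bij y)

@[simp] lemma act_apply (y x : X) : act y x = x ◁ y := rfl

/-- The inner automorphism group `Inn(X)`. -/
noncomputable def Inn (X : Type*) [PQuandle X] : Subgroup (Equiv.Perm X) :=
  Subgroup.closure (Set.range (act (X := X)))

/-- The relators `e_{x ◁ y}⁻¹ e_y⁻¹ e_x e_y` of the adjoint group. -/
def adjRels (X : Type*) [PQuandle X] : Set (FreeGroup X) :=
  { r | ∃ x y : X,
      r = (FreeGroup.of (x ◁ y))⁻¹ * (FreeGroup.of y)⁻¹ * FreeGroup.of x * FreeGroup.of y }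

/-- The adjoint (enveloping) group `As(X)` of the quandle `X`. -/
def Adj (X : Type*) [PQuandle X] : Type _ := PresentedGroup (adjRels X)

instance : Group (Adj X) := by unfold Adj; infer_instance

/-- The generator `e_x` of `As(X)`. -/
def gen (x : X) : Adj X := PresentedGroup.of x

lemma gen_rel (x y : X) : gen (x ◁ y) = (gen y)⁻¹ * gen x * gen y := by
  have h : ((FreeGroup.of (x ◁ y))⁻¹ * (FreeGroup.of y)⁻¹ * FreeGroup.of x * FreeGroup.of y :
      FreeGroup X) ∈ Subgroup.normalClosure (adjRels X) :=
    Subgroup.subset_normalClosure ⟨x, y, rfl⟩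
  have h2 : ((gen (x ◁ y))⁻¹ * (gen y)⁻¹ * gen x * gen y : Adj X) = 1 := by
    have := (QuotientGroup.eq_one_iff
      (((FreeGroup.of (x ◁ y))⁻¹ * (FreeGroup.of y)⁻¹ * FreeGroup.of x * FreeGroup.of y :
        FreeGroup X))).mpr h
    exact this
  calc gen (x ◁ y)
      = gen (x ◁ y) * ((gen (x ◁ y))⁻¹ * (gen y)⁻¹ * gen x * gen y) := by rw [h2, mul_one]
    _ = (gen y)⁻¹ * gen x * gen y := by group

lemma act_mul_act (x y : X) : act y * act x = act (x ◁ y) * act y := by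
  ext z
  simp only [Equiv.Perm.mul_apply, act_apply]
  exact op_distrib z x y

/-- The homomorphism `As(X) → Perm(X)` sending `e_y` to the inverse of the right
translation by `y`; it encodes the right action of `As(X)` on `X`. -/
noncomputable def innHom : Adj X →* Equiv.Perm X :=
  PresentedGroup.toGroup (f := fun y : X => (act y)⁻¹) (by
    rintro r ⟨x, y, rfl⟩
    simp only [map_mul, map_inv, FreeGroup.lift_apply_of, inv_inv]
    have := act_mul_act x y
    calc act (x ◁ y) * act y * (act x)⁻¹ * (act y)⁻¹
        = (act y * act x) * (act x)⁻¹ * (act y)⁻¹ := by rw [this]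
      _ = 1 := by group)

@[simp] lemma innHom_gen (y : X) : innHom (gen y) = (act y)⁻¹ :=
  PresentedGroup.toGroup.of _

/-- The right action of `As(X)` on `X`: `x · g`. -/
noncomputable def ract (x : X) (g : Adj X) : X := (innHom g)⁻¹ x

@[simp] lemma ract_gen (x y : X) : ract x (gen y) = x ◁ y := by
  simp [ract]

lemma ract_mul (x : X) (g h : Adj X) : ract x (g * h) = ract (ract x g) h := by
  simp [ract, map_mul]

/-- A quandle is connected if the right action of `As(X)` on `X` is transitive. -/
def Connected (X : Type*) [PQuandle X] : Prop :=
  ∀ x y : X, ∃ g : Adj X, ract x g = y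

/-- The homomorphism `ε : As(X) → ℤ` sending every generator `e_x` to `1`. -/
def eps : Adj X →* Multiplicative ℤ :=
  PresentedGroup.toGroup (f := fun _ : X => Multiplicative.ofAdd 1) (by
    rintro r ⟨x, y, rfl⟩
    simp only [map_mul, map_inv, FreeGroup.lift_apply_of]
    group)

@[simp] lemma eps_gen (x : X) : eps (gen x) = Multiplicative.ofAdd 1 :=
  PresentedGroup.toGroup.of _

/-- The underlying set of the universal covering quandle: `Ker ε`. -/
def covOp (a : X) (g h : (eps (X := X)).ker) : (eps (X := X)).ker :=
  ⟨(gen a)⁻¹ * g.1 * (h.1)⁻¹ * gen a * h.1, by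
    have hg : eps g.1 = 1 := g.2
    have hh : eps h.1 = 1 := h.2
    simp only [MonoidHom.mem_ker, map_mul, map_inv, hg, hh]
    group⟩

/-- `n`-fold covering operation. -/
def covOpn (a : X) (g : (eps (X := X)).ker) (n : ℕ) (h : (eps (X := X)).ker) :
    (eps (X := X)).ker := (fun u => covOp a u h)^[n] g

/-- The right translation of the covering quandle as a permutation. -/
def covAct (a : X) (h : (eps (X := X)).ker) : Equiv.Perm (eps (X := X)).ker where
  toFun g := covOp a g h
  invFun g := ⟨gen a * g.1 * (h.1)⁻¹ * (gen a)⁻¹ * h.1, by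
    have hg : eps g.1 = 1 := g.2
    have hh : eps h.1 = 1 := h.2
    simp only [MonoidHom.mem_ker, map_mul, map_inv, hg, hh]
    group⟩
  left_inv g := by
    apply Subtype.ext
    simp only [covOp]
    group
  right_inv g := by
    apply Subtype.ext
    simp only [covOp]
    group

end PQuandle

/-! `As(X)` acts on `X̂ = Ker ε` by `u ↦ (g ↦ e_a ^ ε(u) * g * u⁻¹)`, transitively: `h⁻¹ g`
sends `g` to `h`. By connectedness every `e_x` equals `k⁻¹ e_a k` with `k ∈ Ker ε`: take `g`
with `a · g = x`, so that `e_x = g⁻¹ e_a g`, and multiply `g` on the left by the power of `e_a`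
(which fixes `a`) that brings it to degree `0`. Then `e_x⁻¹` acts as the translation `· ◁ k`
of `X̂`, so the whole action, and with it transitivity, lies in the group generated by the
translations. -/

section KernelShift

open Multiplicative

variable {G : Type*} [Group G] {ε : G →* Multiplicative ℤ} {t : G}

theorem map_zpow_toAdd_eq (ht : ε t = ofAdd 1) (u : G) : ε (t ^ toAdd (ε u)) = ε u := by
  rw [map_zpow, ht, ← ofAdd_zsmul, smul_eq_mul, mul_one, ofAdd_toAdd]

variable (ε) in
/-- Left multiplication by `t ^ ε u` restores the degree lost by `g ↦ g * u⁻¹`. -/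
def kerShift (ht : ε t = ofAdd 1) : G →* Equiv.Perm ε.ker where
  toFun u :=
    { toFun := fun g => ⟨t ^ toAdd (ε u) * g * u⁻¹, by
        simp [map_zpow_toAdd_eq ht, ε.mem_ker.mp g.2]⟩
      invFun := fun g => ⟨(t ^ toAdd (ε u))⁻¹ * g * u, by
        simp [map_zpow_toAdd_eq ht, ε.mem_ker.mp g.2]⟩
      left_inv := fun g => Subtype.ext (by group)
      right_inv := fun g => Subtype.ext (by group) }
  map_one' := by ext; simp
  map_mul' u v := by ext; simp [zpow_add, mul_assoc]

theorem kerShift_apply_coe (ht : ε t = ofAdd 1) (u : G) (g : ε.ker) :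
    (kerShift ε ht u g : G) = t ^ toAdd (ε u) * g * u⁻¹ := rfl

theorem kerShift_inv_mul_apply (ht : ε t = ofAdd 1) (g h : ε.ker) :
    kerShift ε ht ((h : G)⁻¹ * g) g = h := by
  ext
  rw [kerShift_apply_coe, map_mul, map_inv, ε.mem_ker.mp g.2, ε.mem_ker.mp h.2]
  simp

end KernelShift

namespace PQuandle

variable {X : Type*} [PQuandle X]

theorem closure_range_gen : Subgroup.closure (Set.range (gen : X → Adj X)) = ⊤ :=
  PresentedGroup.closure_range_of _

theorem ract_one (x : X) : ract x 1 = x := by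
  simp [ract]

theorem ract_inv_gen_op (x y : X) : ract x (gen y)⁻¹ ◁ y = x := by
  rw [← ract_gen, ← ract_mul, inv_mul_cancel, ract_one]

theorem gen_ract (x : X) (g : Adj X) : gen (ract x g) = g⁻¹ * gen x * g := by
  have hg : g ∈ Subgroup.closure (Set.range gen) := by
    rw [closure_range_gen]; exact Subgroup.mem_top g
  induction hg using Subgroup.closure_induction'' generalizing x with
  | mem _ hy =>
    obtain ⟨y, rfl⟩ := hy
    rw [ract_gen, gen_rel]
  | inv_mem _ hy =>
    obtain ⟨y, rfl⟩ := hy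
    have h := gen_rel (ract x (gen y)⁻¹) y
    rw [ract_inv_gen_op] at h
    rw [h]
    group
  | one => rw [ract_one]; group
  | mul u v _ _ hu hv => rw [ract_mul, hv, hu]; group

theorem ract_gen_self_zpow (a : X) (n : ℤ) : ract a (gen a ^ n) = a := by
  have hfix : Function.IsFixedPt ⇑((act a)⁻¹ : Equiv.Perm X) a := by
    rw [Function.IsFixedPt, Equiv.Perm.inv_eq_iff_eq, act_apply, op_self]
  simpa [ract, map_zpow] using (hfix.perm_zpow (-n)).eq

theorem Connected.exists_mem_ker_gen_eq (hconn : Connected X) (a x : X) :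
    ∃ k ∈ (eps (X := X)).ker, gen x = k⁻¹ * gen a * k := by
  obtain ⟨g, rfl⟩ := hconn a x
  refine ⟨gen a ^ (-Multiplicative.toAdd (eps g)) * g, ?_, ?_⟩
  · simp [MonoidHom.mem_ker, map_zpow_toAdd_eq (eps_gen a)]
  · rw [← gen_ract, ract_mul, ract_gen_self_zpow]

theorem covAct_eq_kerShift (a : X) {x : X} (k : (eps (X := X)).ker)
    (hx : gen x = (k : Adj X)⁻¹ * gen a * k) :
    covAct a k = kerShift eps (eps_gen a) (gen x)⁻¹ := by
  ext g
  rw [kerShift_apply_coe, map_inv, eps_gen, inv_inv, hx]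
  simp [covAct, covOp, mul_assoc]

theorem range_kerShift_le_closure_covAct (hconn : Connected X) (a : X) :
    (kerShift eps (eps_gen a)).range ≤ Subgroup.closure (Set.range (covAct a)) := by
  rw [MonoidHom.range_eq_map, ← closure_range_gen, MonoidHom.map_closure, Subgroup.closure_le]
  rintro _ ⟨_, ⟨x, rfl⟩, rfl⟩
  obtain ⟨k, hk, hx⟩ := hconn.exists_mem_ker_gen_eq a x
  rw [← inv_inv (gen x), map_inv, ← covAct_eq_kerShift a ⟨k, hk⟩ hx]
  exact inv_mem (Subgroup.subset_closure ⟨_, rfl⟩)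

end PQuandle

open PQuandle in
/-- The universal covering quandle `X̂` of a connected quandle `X` is connected: the group
generated by its right translations acts transitively. -/
theorem stmt16 (X : Type*) [PQuandle X] (hconn : Connected X) (a : X) :
    ∀ g h : (eps (X := X)).ker,
      ∃ f ∈ Subgroup.closure (Set.range (covAct a)), f g = h :=
  fun g h => ⟨_, range_kerShift_le_closure_covAct hconn a ⟨(h : Adj X)⁻¹ * g, rfl⟩,
    kerShift_inv_mul_apply (eps_gen a) g h⟩
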